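/- For every ε > 0 and every integer k ≥ 1, the mechanism M_ε satisfies ε-metric local differential privacy with respect to the ℓ1 (absolute-value) distance on the reals: for all inputs x, x' ∈ ℝ and every subset O ⊆ {1,…,k}, the probability that M_ε(x) lands in O is at most exp(ε·|x − x'|) times the probability that M_ε(x') lands in O, i.e. Σ_{i∈O} p_ε(x,i) ≤ exp(ε·|x − x'|) · Σ_{i∈O} p_ε(x',i). -/

import Mathlib

/-- The Preempt exponential mechanism: on input `x : ℝ`, output `i ∈ {1,…,k}` with
probability `exp(-ε·|x-i|/2) / ∑_{j=1}^k exp(-ε·|x-j|/2)`. -/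
noncomputable def preemptProb (ε : ℝ) (k : ℕ) (x : ℝ) (i : ℕ) : ℝ :=
  Real.exp (-(ε * |x - (i : ℝ)|) / 2) /
    ∑ j ∈ Finset.Icc 1 k, Real.exp (-(ε * |x - (j : ℝ)|) / 2)

lemma preempt_num_le (ε : ℝ) (hε : 0 < ε) (x x' : ℝ) (i : ℝ) :
    Real.exp (-(ε * |x - i|) / 2) ≤
      Real.exp (ε * |x - x'| / 2) * Real.exp (-(ε * |x' - i|) / 2) := by
  rw [← Real.exp_add]
  apply Real.exp_le_exp.mpr
  have h1 : |x' - i| - |x - i| ≤ |x' - x| := by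
    have := abs_sub_abs_le_abs_sub (x' - i) (x - i)
    have h2 : x' - i - (x - i) = x' - x := by ring
    rwa [h2] at this
  have h3 : |x' - x| = |x - x'| := abs_sub_comm _ _
  nlinarith [h1, h3]

lemma preempt_sum_pos (ε : ℝ) (k : ℕ) (hk : 1 ≤ k) (x : ℝ) :
    0 < ∑ j ∈ Finset.Icc 1 k, Real.exp (-(ε * |x - (j : ℝ)|) / 2) := by
  apply Finset.sum_pos (fun j _ => Real.exp_pos _)
  exact ⟨1, Finset.mem_Icc.mpr ⟨le_refl 1, hk⟩⟩

lemma preempt_pointwise (ε : ℝ) (hε : 0 < ε) (k : ℕ) (hk : 1 ≤ k)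
    (x x' : ℝ) (i : ℕ) :
    preemptProb ε k x i ≤ Real.exp (ε * |x - x'|) * preemptProb ε k x' i := by
  unfold preemptProb
  set Sx := ∑ j ∈ Finset.Icc 1 k, Real.exp (-(ε * |x - (j : ℝ)|) / 2) with hSx
  set Sx' := ∑ j ∈ Finset.Icc 1 k, Real.exp (-(ε * |x' - (j : ℝ)|) / 2) with hSx'
  have hSxpos : 0 < Sx := preempt_sum_pos ε k hk x
  have hSx'pos : 0 < Sx' := preempt_sum_pos ε k hk x'
  rw [div_le_iff₀ hSxpos]
  have hnum : Real.exp (-(ε * |x - (i : ℝ)|) / 2) ≤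
      Real.exp (ε * |x - x'| / 2) * Real.exp (-(ε * |x' - (i : ℝ)|) / 2) :=
    preempt_num_le ε hε x x' i
  have hden : Sx' ≤ Real.exp (ε * |x - x'| / 2) * Sx := by
    rw [hSx', hSx, Finset.mul_sum]
    apply Finset.sum_le_sum
    intro j _
    have := preempt_num_le ε hε x' x (j : ℝ)
    rwa [abs_sub_comm x' x] at this
  have hE : Real.exp (ε * |x - x'| / 2) * Real.exp (ε * |x - x'| / 2) =
      Real.exp (ε * |x - x'|) := by
    rw [← Real.exp_add]; ring_nf
  have hEpos : 0 < Real.exp (ε * |x - x'| / 2) := Real.exp_pos _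
  have hnum' : 0 < Real.exp (-(ε * |x' - (i : ℝ)|) / 2) := Real.exp_pos _
  calc Real.exp (-(ε * |x - (i : ℝ)|) / 2)
      ≤ Real.exp (ε * |x - x'| / 2) * Real.exp (-(ε * |x' - (i : ℝ)|) / 2) := hnum
    _ ≤ Real.exp (ε * |x - x'| / 2) * Real.exp (-(ε * |x' - (i : ℝ)|) / 2) *
          (Real.exp (ε * |x - x'| / 2) * Sx / Sx') := by
        have h1 : (1:ℝ) ≤ Real.exp (ε * |x - x'| / 2) * Sx / Sx' :=
          (one_le_div hSx'pos).mpr hden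
        exact le_mul_of_one_le_right (le_of_lt (mul_pos hEpos hnum')) h1
    _ = Real.exp (ε * |x - x'|) *
          (Real.exp (-(ε * |x' - (i : ℝ)|) / 2) / Sx') * Sx := by
        rw [← hE]; field_simp

/-- The mechanism `M_ε` satisfies `ε`-metric local differential privacy for the ℓ1
distance: for all inputs `x, x'` and every subset `O ⊆ {1,…,k}`,
`Pr[M_ε(x) ∈ O] ≤ exp(ε·|x-x'|) · Pr[M_ε(x') ∈ O]`. -/
theorem preempt_mLDP (ε : ℝ) (hε : 0 < ε) (k : ℕ) (hk : 1 ≤ k)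
    (x x' : ℝ) (O : Finset ℕ) (hO : O ⊆ Finset.Icc 1 k) :
    ∑ i ∈ O, preemptProb ε k x i ≤
      Real.exp (ε * |x - x'|) * ∑ i ∈ O, preemptProb ε k x' i := by
  rw [Finset.mul_sum]
  exact Finset.sum_le_sum fun i _ => preempt_pointwise ε hε k hk x x' i
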